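/- arXiv:1903.05668 — 5 statements merged into one kernel-verified Lean document; each statement's English description precedes it below -/
import Mathlib

section
/- Let C be a category and let F, G : C → C be functors equipped with natural transformations α : Id_C ⟹ F and β : Id_C ⟹ G that are idempotent, i.e. for every object c the morphisms α_{F(c)} : F(c) → F(F(c)), F(α_c) : F(c) → F(F(c)), β_{G(c)} : G(c) → G(G(c)) and G(β_c) : G(c) → G(G(c)) are isomorphisms. Assume that for every object c of C, c is isomorphic to F(c) if and only if c is isomorphic to G(c). Then there is a natural isomorphism δ : F ≅ G such that for every object c one has β_c = δ_c ∘ α_c. -/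
open CategoryTheory

section Aux

variable {C : Type*} [Category C]

/-- If `c` is isomorphic to `F c` (any iso) and the coaugmentation is idempotent,
then `α_c` itself is an isomorphism. -/
lemma aux_loc (F : C ⥤ C) (α : 𝟭 C ⟶ F)
    (hFα : ∀ c : C, IsIso (α.app (F.obj c)))
    {c : C} (e : c ≅ F.obj c) : IsIso (α.app c) := by
  have nat : α.app c ≫ F.map e.hom = e.hom ≫ α.app (F.obj c) := (α.naturality e.hom).symm
  have : α.app c = e.hom ≫ α.app (F.obj c) ≫ inv (F.map e.hom) := by
    rw [← Category.assoc, ← nat]; simp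
  rw [this]
  haveI := hFα c
  infer_instance

/-- Cancellation: if `α_y` is an isomorphism, precomposition with `α_x` is injective
on maps `F x ⟶ y`. -/
lemma aux_uniq (F : C ⥤ C) (α : 𝟭 C ⟶ F)
    (hFα : ∀ c : C, IsIso (α.app (F.obj c)))
    (hFα' : ∀ c : C, IsIso (F.map (α.app c)))
    {x y : C} (hy : IsIso (α.app y))
    {f g : F.obj x ⟶ y} (H : α.app x ≫ f = α.app x ≫ g) : f = g := by
  haveI := hFα' x
  have h2 : F.map (α.app x) ≫ F.map f = F.map (α.app x) ≫ F.map g := by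
    rw [← F.map_comp, ← F.map_comp, H]
  have h3 : F.map f = F.map g := by
    exact (cancel_epi (F.map (α.app x))).mp h2
  have n1 : f ≫ α.app y = α.app (F.obj x) ≫ F.map f := α.naturality f
  have n2 : g ≫ α.app y = α.app (F.obj x) ≫ F.map g := α.naturality g
  haveI := hy
  have : f ≫ α.app y = g ≫ α.app y := by rw [n1, n2, h3]
  exact (cancel_mono (α.app y)).mp this

end Aux

/-- Two coaugmented idempotent endofunctors `(F, α)` and `(G, β)` on a category `C`
such that, for every object `c`, `c ≅ F(c)` iff `c ≅ G(c)`, are naturally isomorphic via an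
isomorphism `δ : F ≅ G` compatible with the coaugmentations, i.e. `β_c = δ_c ∘ α_c`. -/
theorem coaugmented_idempotent_functors_iso {C : Type*} [Category C]
    (F G : C ⥤ C) (α : 𝟭 C ⟶ F) (β : 𝟭 C ⟶ G)
    (hFα : ∀ c : C, IsIso (α.app (F.obj c))) (hFα' : ∀ c : C, IsIso (F.map (α.app c)))
    (hGβ : ∀ c : C, IsIso (β.app (G.obj c))) (hGβ' : ∀ c : C, IsIso (G.map (β.app c)))
    (h : ∀ c : C, Nonempty (c ≅ F.obj c) ↔ Nonempty (c ≅ G.obj c)) :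
    ∃ δ : F ≅ G, ∀ c : C, β.app c = α.app c ≫ δ.hom.app c := by
  -- localness transfer
  have hαG : ∀ c : C, IsIso (α.app (G.obj c)) := by
    intro c
    haveI := hGβ c
    exact aux_loc F α hFα (((h (G.obj c)).mpr ⟨asIso (β.app (G.obj c))⟩).some)
  have hβF : ∀ c : C, IsIso (β.app (F.obj c)) := by
    intro c
    haveI := hFα c
    exact aux_loc G β hGβ (((h (F.obj c)).mp ⟨asIso (α.app (F.obj c))⟩).some)
  -- the candidate components
  let δ : ∀ c : C, F.obj c ⟶ G.obj c := fun c =>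
    F.map (β.app c) ≫ @inv _ _ _ _ _ (hαG c)
  let ε : ∀ c : C, G.obj c ⟶ F.obj c := fun c =>
    G.map (α.app c) ≫ @inv _ _ _ _ _ (hβF c)
  have hδ : ∀ c : C, α.app c ≫ δ c = β.app c := by
    intro c
    haveI := hαG c
    have nat : β.app c ≫ α.app (G.obj c) = α.app c ≫ F.map (β.app c) := α.naturality (β.app c)
    show α.app c ≫ F.map (β.app c) ≫ inv (α.app (G.obj c)) = β.app c
    rw [← Category.assoc, ← nat, Category.assoc, IsIso.hom_inv_id, Category.comp_id]
  have hε : ∀ c : C, β.app c ≫ ε c = α.app c := by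
    intro c
    haveI := hβF c
    have nat : α.app c ≫ β.app (F.obj c) = β.app c ≫ G.map (α.app c) := β.naturality (α.app c)
    show β.app c ≫ G.map (α.app c) ≫ inv (β.app (F.obj c)) = α.app c
    rw [← Category.assoc, ← nat, Category.assoc, IsIso.hom_inv_id, Category.comp_id]
  -- δ and ε are inverse
  have hδε : ∀ c : C, δ c ≫ ε c = 𝟙 (F.obj c) := by
    intro c
    refine aux_uniq F α hFα hFα' (hFα c) ?_
    rw [← Category.assoc, hδ, hε, Category.comp_id]
  have hεδ : ∀ c : C, ε c ≫ δ c = 𝟙 (G.obj c) := by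
    intro c
    refine aux_uniq G β hGβ hGβ' (hGβ c) ?_
    rw [← Category.assoc, hε, hδ, Category.comp_id]
  -- naturality of δ
  have hnat : ∀ {c d : C} (f : c ⟶ d), F.map f ≫ δ d = δ c ≫ G.map f := by
    intro c d f
    refine aux_uniq F α hFα hFα' (hαG d) ?_
    have n1 : α.app c ≫ F.map f = f ≫ α.app d := (α.naturality f).symm
    have n2 : f ≫ β.app d = β.app c ≫ G.map f := by
      simpa using (β.naturality f)
    rw [← Category.assoc, n1, Category.assoc, hδ, n2, ← hδ c, Category.assoc]
  refine ⟨NatIso.ofComponents (fun c => ⟨δ c, ε c, hδε c, hεδ c⟩) (fun f => hnat f), ?_⟩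
  intro c
  simp [hδ c]
end

section
/- Let C be a category and F : C → C a functor with a natural transformation α : Id_C ⟹ F such that for every object c the morphisms α_{F(c)} and F(α_c) are isomorphisms. If d is an object such that α_d : d → F(d) is an isomorphism, then for every object c the map Hom_C(F(c), d) → Hom_C(c, d) given by h ↦ h ∘ α_c is a bijection; in particular every morphism g : c → d factors uniquely through α_c : c → F(c). -/
open CategoryTheory

/-- If `(F, α)` is a coaugmented idempotent endofunctor on `C` and `d` is an object
such that `α_d : d → F(d)` is an isomorphism, then for every object `c` the map
`Hom(F(c), d) → Hom(c, d)`, `h ↦ h ∘ α_c`, is a bijection; in particular every morphism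
`g : c → d` factors uniquely through `α_c`. -/
theorem local_object_unique_factorization {C : Type*} [Category C]
    (F : C ⥤ C) (α : 𝟭 C ⟶ F)
    (hα : ∀ c : C, IsIso (α.app (F.obj c))) (hα' : ∀ c : C, IsIso (F.map (α.app c)))
    (d : C) (hd : IsIso (α.app d)) (c : C) :
    Function.Bijective (fun h : F.obj c ⟶ d => α.app c ≫ h) ∧
    ∀ g : c ⟶ d, ∃! h : F.obj c ⟶ d, g = α.app c ≫ h := by
  have hnat : ∀ h : F.obj c ⟶ d, h = α.app (F.obj c) ≫ F.map h ≫ inv (α.app d) := by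
    intro h
    have := α.naturality h
    simp only [Functor.id_map] at this
    rw [← Category.assoc, ← this]
    simp
  have hinj : Function.Injective (fun h : F.obj c ⟶ d => α.app c ≫ h) := by
    intro h₁ h₂ e
    simp only at e
    have hm : F.map h₁ = F.map h₂ := by
      have e2 := congrArg F.map e
      simp only [F.map_comp] at e2
      haveI := hα' c
      exact (cancel_epi (F.map (α.app c))).mp e2
    rw [hnat h₁, hnat h₂, hm]
  have hsurj : Function.Surjective (fun h : F.obj c ⟶ d => α.app c ≫ h) := by
    intro g
    refine ⟨F.map g ≫ inv (α.app d), ?_⟩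
    have := α.naturality g
    simp only [Functor.id_map] at this
    simp only [Category.assoc, ← this]
    simp
  refine ⟨⟨hinj, hsurj⟩, fun g => ?_⟩
  obtain ⟨h, hh⟩ := hsurj g
  exact ⟨h, hh.symm, fun h' hh' => hinj (hh'.symm.trans hh.symm)⟩
end

section
/- Let A be a locally compact Hausdorff pointed space and let f : Z → W be a basepoint-preserving continuous map between locally compact Hausdorff pointed spaces. For any pointed space X, the space X is (id_A ∧ f)-local if and only if the pointed mapping space Map_*(A, X) is f-local, where id_A ∧ f : A ∧ Z → A ∧ W is the map induced by f on smash products. -/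
noncomputable section

namespace DetectMS

/-- A pointed topological space. -/
structure PtdSpace : Type 1 where
  /-- underlying type -/
  carrier : Type
  [inst : TopologicalSpace carrier]
  /-- the basepoint -/
  pt : carrier

attribute [instance] PtdSpace.inst

/-- A basepoint-preserving continuous map of pointed spaces. -/
structure PtdMap (X Y : PtdSpace) where
  /-- the underlying continuous map -/
  toFun : C(X.carrier, Y.carrier)
  map_pt : toFun X.pt = Y.pt

/-- Post-composition of a generalized loop with a continuous map. -/
def genLoopPush {X Y : Type} [TopologicalSpace X] [TopologicalSpace Y] {N : Type} {x : X}
    (f : C(X, Y)) (p : GenLoop N X x) : GenLoop N Y (f x) :=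
  ⟨f.comp p.1, fun y hy => by
    simp only [ContinuousMap.comp_apply]
    rw [p.2 y hy]⟩

/-- A continuous map `f : X → Y` is a weak homotopy equivalence if it induces a bijection on
path components and, for every `n` and every basepoint `x : X`, a bijection
`πₙ(X, x) → πₙ(Y, f x)` on homotopy groups (expressed here in terms of generalized loops
up to homotopy rel boundary). -/
def IsWeakHomotopyEquiv {X Y : Type} [TopologicalSpace X] [TopologicalSpace Y]
    (f : C(X, Y)) : Prop :=
  (∀ y : Y, ∃ x : X, Joined (f x) y) ∧
  (∀ x x' : X, Joined (f x) (f x') → Joined x x') ∧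
  (∀ (n : ℕ) (x : X),
    (∀ q : GenLoop (Fin n) Y (f x), ∃ p : GenLoop (Fin n) X x,
      GenLoop.Homotopic (genLoopPush f p) q) ∧
    (∀ p p' : GenLoop (Fin n) X x,
      GenLoop.Homotopic (genLoopPush f p) (genLoopPush f p') → GenLoop.Homotopic p p'))

/-- Two pointed spaces are weakly (homotopy) equivalent if they are connected by a zigzag of
weak homotopy equivalences. -/
def WeaklyEquivalent : PtdSpace → PtdSpace → Prop :=
  Relation.EqvGen fun X Y => ∃ f : C(X.carrier, Y.carrier), IsWeakHomotopyEquiv f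

/-- `Map_*(A, X)`: the space of basepoint-preserving continuous maps `A → X` with the
compact-open topology, pointed at the constant map. -/
def mapSpace (A X : PtdSpace) : PtdSpace where
  carrier := { f : C(A.carrier, X.carrier) // f A.pt = X.pt }
  pt := ⟨ContinuousMap.const A.carrier X.pt, rfl⟩

/-- Precomposition `Map_*(W, X) → Map_*(Z, X)` with a pointed map `f : Z → W`. -/
def precompMap {Z W : PtdSpace} (f : PtdMap Z W) (X : PtdSpace) :
    C((mapSpace W X).carrier, (mapSpace Z X).carrier) where
  toFun g := ⟨g.1.comp f.toFun, by rw [ContinuousMap.comp_apply, f.map_pt, g.2]⟩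
  continuous_toFun := by
    apply Continuous.subtype_mk
    exact (ContinuousMap.continuous_precomp f.toFun).comp continuous_subtype_val

/-- A pointed space `X` is `f`-local if precomposition with `f` is a weak homotopy
equivalence `Map_*(W, X) → Map_*(Z, X)`. -/
def IsLocal {Z W : PtdSpace} (f : PtdMap Z W) (X : PtdSpace) : Prop :=
  IsWeakHomotopyEquiv (precompMap f X)

/-- A pointed map `η : M → M'` is an `f`-equivalence if for every `f`-local space `T` the
induced map `Map_*(M', T) → Map_*(M, T)` is a weak homotopy equivalence. -/
def IsLocalEquiv {Z W M M' : PtdSpace} (f : PtdMap Z W) (η : PtdMap M M') : Prop :=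
  ∀ T : PtdSpace, IsLocal f T → IsWeakHomotopyEquiv (precompMap η T)

/-- `η : M → M'` is an `f`-localization if it is an `f`-equivalence and `M'` is `f`-local. -/
def IsLocalization {Z W M M' : PtdSpace} (f : PtdMap Z W) (η : PtdMap M M') : Prop :=
  IsLocalEquiv f η ∧ IsLocal f M'

/-- A pointed space `A` is L-good if for every pointed map `f` and every pointed space `X`
there exist a pointed space `Y` and an `f`-localization `Map_*(A,X) → M'` with `M'` weakly
homotopy equivalent to `Map_*(A, Y)`. -/
def IsLGood (A : PtdSpace) : Prop :=
  ∀ (Z W : PtdSpace) (f : PtdMap Z W) (X : PtdSpace),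
    ∃ (Y M' : PtdSpace) (η : PtdMap (mapSpace A X) M'),
      IsLocalization f η ∧ WeaklyEquivalent M' (mapSpace A Y)

/-- A pointed space `A` is strongly L-good if for every pointed map `f` and every pointed
space `X` there exist a pointed map `g`, a `g`-localization `X → X'`, and an
`f`-localization `Map_*(A,X) → M'` such that `M'` is weakly homotopy equivalent to
`Map_*(A, X')`. -/
def IsStronglyLGood (A : PtdSpace) : Prop :=
  ∀ (Z W : PtdSpace) (f : PtdMap Z W) (X : PtdSpace),
    ∃ (Z' W' : PtdSpace) (g : PtdMap Z' W') (X' : PtdSpace) (θ : PtdMap X X')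
      (M' : PtdSpace) (η : PtdMap (mapSpace A X) M'),
      IsLocalization g θ ∧ IsLocalization f η ∧ WeaklyEquivalent M' (mapSpace A X')

/-- The `q`-th singular homology of a topological space with integer coefficients, defined as
the `q`-th homology of the alternating face map complex of the free `ℤ`-module on the
singular simplicial set. -/
def singularHomology (q : ℕ) (X : Type) [TopologicalSpace X] : ModuleCat ℤ :=
  (((AlgebraicTopology.alternatingFaceMapComplex (ModuleCat ℤ)).obj
      (((CategoryTheory.SimplicialObject.whiskering _ _).obj (ModuleCat.free ℤ)).obj
        (TopCat.toSSet.obj (TopCat.of X)))).homology q)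

section OldCWComplex

open CategoryTheory

universe u

namespace RelativeCWComplex

/-- The `n`-dimensional sphere (as in Mathlib of December 2024). -/
def sphere (n : ℤ) : TopCat.{u} :=
  TopCat.of <| ULift <| Metric.sphere (0 : EuclideanSpace ℝ <| Fin <| (n + 1).toNat) 1

/-- The `n`-dimensional closed disk (as in Mathlib of December 2024). -/
def disk (n : ℤ) : TopCat.{u} :=
  TopCat.of <| ULift <| Metric.closedBall (0 : EuclideanSpace ℝ <| Fin <| n.toNat) 1

/-- The inclusion map from the `n`-sphere to the `(n + 1)`-disk. -/
def sphereInclusion (n : ℤ) : sphere.{u} n ⟶ disk.{u} (n + 1) :=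
  TopCat.ofHom
    { toFun := fun p => ULift.up ⟨p.down.1, le_of_eq p.down.2⟩
      continuous_toFun := continuous_uliftUp.comp
        (Continuous.subtype_mk (continuous_subtype_val.comp continuous_uliftDown) _) }

variable {S D : TopCat.{u}} (f : S ⟶ D)

/-- The inclusion of the disjoint unions of boundaries into the disjoint union of cells. -/
def generalizedSigmaSphereInclusion (cells : Type u) :
    (Limits.sigmaObj fun (_ : cells) => S) ⟶ (Limits.sigmaObj fun (_ : cells) => D) :=
  Limits.Sigma.map fun _ => f

/-- The attaching map for the disjoint union of all the boundaries. -/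
def generalizedSigmaAttachMap (X : TopCat.{u}) (cells : Type u)
    (attachMaps : cells → (S ⟶ X)) : (Limits.sigmaObj fun (_ : cells) => S) ⟶ X :=
  Limits.Sigma.desc attachMaps

/-- `X'` is obtained from `X` by attaching generalized cells given by `f : S ⟶ D`. -/
structure AttachGeneralizedCells (X X' : TopCat.{u}) where
  /-- The index type over the generalized cells -/
  cells : Type u
  /-- An attaching map for each generalized cell -/
  attachMaps : cells → (S ⟶ X)
  /-- `X'` is the pushout. -/
  iso_pushout : X' ≅ Limits.pushout (generalizedSigmaSphereInclusion f cells)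
    (generalizedSigmaAttachMap X cells attachMaps)

/-- `X'` is obtained from `X` by attaching `(n + 1)`-cells. -/
def AttachCells (n : ℤ) := AttachGeneralizedCells (sphereInclusion.{u} n)

end RelativeCWComplex

/-- A relative CW-complex (as in Mathlib of December 2024). -/
structure RelativeCWComplex where
  /-- The skeletons. -/
  sk : ℕ → TopCat.{u}
  /-- Each `sk (n + 1)` is obtained from `sk n` by attaching `n`-cells. -/
  attachCells (n : ℕ) : RelativeCWComplex.AttachCells ((n : ℤ) - 1) (sk n) (sk (n + 1))

/-- A CW-complex (as in Mathlib of December 2024). -/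
structure CWComplex extends RelativeCWComplex.{u} where
  /-- `sk 0` is empty. -/
  isEmpty_sk_zero : IsEmpty (sk 0)

namespace RelativeCWComplex

/-- The inclusion map from `X` to `X'`. -/
def AttachCells.inclusion {X X' : TopCat.{u}} {n : ℤ} (att : AttachCells n X X') : X ⟶ X' :=
  Limits.pushout.inr _ _ ≫ att.iso_pushout.inv

/-- The inclusion map from `sk n` to `sk (n + 1)`. -/
def skInclusion (X : RelativeCWComplex.{u}) (n : ℕ) : X.sk n ⟶ X.sk (n + 1) :=
  (X.attachCells n).inclusion

/-- The topology on a relative CW-complex. -/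
def toTopCat (X : RelativeCWComplex.{u}) : TopCat.{u} :=
  Limits.colimit (Functor.ofSequence X.skInclusion)

end RelativeCWComplex

end OldCWComplex

/-- A space is a finite CW-complex if it is homeomorphic to (the realization of) a CW-complex
with finitely many cells. -/
def IsFiniteCWComplex (A : Type) [TopologicalSpace A] : Prop :=
  ∃ X : CWComplex.{0},
    (∀ n, Finite (RelativeCWComplex.AttachGeneralizedCells.cells (X.attachCells n))) ∧
    (∃ N : ℕ, ∀ n, N ≤ n →
      IsEmpty (RelativeCWComplex.AttachGeneralizedCells.cells (X.attachCells n))) ∧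
    Nonempty (A ≃ₜ X.toTopCat)


/-- The relation on `A × Z` collapsing the wedge `A ∨ Z ⊆ A × Z` to a point. -/
def smashRel (A Z : PtdSpace) : (A.carrier × Z.carrier) → (A.carrier × Z.carrier) → Prop :=
  fun p q => (p.1 = A.pt ∨ p.2 = Z.pt) ∧ (q.1 = A.pt ∨ q.2 = Z.pt)

/-- The smash product `A ∧ Z`: the quotient of `A × Z` collapsing
`A × {z₀} ∪ {a₀} × Z` to a point. -/
def Smash (A Z : PtdSpace) : PtdSpace where
  carrier := Quot (smashRel A Z)
  pt := Quot.mk _ (A.pt, Z.pt)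

theorem smashRel_lift {A Z W : PtdSpace} (f : PtdMap Z W) :
    ∀ a b : A.carrier × Z.carrier, smashRel A Z a b →
      Quot.mk (smashRel A W) (a.1, f.toFun a.2) = Quot.mk (smashRel A W) (b.1, f.toFun b.2) := by
  rintro a b ⟨ha, hb⟩
  apply Quot.sound
  constructor
  · rcases ha with h | h
    · exact Or.inl h
    · exact Or.inr (by rw [h, f.map_pt])
  · rcases hb with h | h
    · exact Or.inl h
    · exact Or.inr (by rw [h, f.map_pt])

/-- The map `id_A ∧ f : A ∧ Z → A ∧ W` induced by a pointed map `f : Z → W`. -/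
def smashMap (A : PtdSpace) {Z W : PtdSpace} (f : PtdMap Z W) :
    PtdMap (Smash A Z) (Smash A W) where
  toFun :=
    { toFun := Quot.lift (fun p => Quot.mk (smashRel A W) (p.1, f.toFun p.2)) (smashRel_lift f)
      continuous_toFun := continuous_quot_lift _
        (continuous_quot_mk.comp
          (Continuous.prodMk continuous_fst (f.toFun.continuous.comp continuous_snd))) }
  map_pt := Quot.sound ⟨Or.inl rfl, Or.inl rfl⟩

/-!
Currying gives a bijection `Map_*(A ∧ Z, X) ≃ Map_*(Z, Map_*(A, X))`, natural in `Z`, which turns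
precomposition with `id_A ∧ f` into precomposition with `f`. Without separation axioms it need
not be a homeomorphism, but by the exponential law it preserves and reflects continuity of maps
out of locally compact spaces `T` (for such `T`, `T × (A × Z) → T × (A ∧ Z)` is a quotient map).
Weak homotopy equivalences only involve paths and homotopies of cubes, which are maps out of
compact spaces, so they transfer along such bijections.
-/

open Topology

/-- A bijection that detects continuity of maps out of locally compact spaces in both
directions; "k-homeomorphism" because it becomes a homeomorphism after k-ification. -/
def IsKHomeomorph {S₁ S₂ : Type} [TopologicalSpace S₁] [TopologicalSpace S₂] (e : S₁ ≃ S₂) :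
    Prop :=
  ∀ (T : Type) [TopologicalSpace T] [LocallyCompactSpace T] (c : T → S₁),
    Continuous (e ∘ c) ↔ Continuous c

namespace IsKHomeomorph

variable {S₁ S₂ : Type} [TopologicalSpace S₁] [TopologicalSpace S₂] {e : S₁ ≃ S₂}

theorem symm (he : IsKHomeomorph e) : IsKHomeomorph e.symm := by
  intro T _ _ c
  rw [← he T, ← Function.comp_assoc, e.self_comp_symm, Function.id_comp]

variable (he : IsKHomeomorph e)
include he

section
variable {N : Type} [TopologicalSpace N] [LocallyCompactSpace N]

def comp (p : C(N, S₁)) : C(N, S₂) :=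
  ⟨e ∘ p, (he N p).2 p.continuous⟩

@[simp]
theorem comp_apply (p : C(N, S₁)) (y : N) : he.comp p y = e (p y) :=
  rfl

@[simp]
theorem comp_symm_comp (p : C(N, S₂)) : he.comp (he.symm.comp p) = p := by
  ext; simp

theorem joined_map {x y : S₁} (hxy : Joined x y) : Joined (e x) (e y) :=
  let γ := hxy.somePath
  ⟨⟨he.comp γ.toContinuousMap, by simp, by simp⟩⟩

theorem homotopicRel_comp {p q : C(N, S₁)} {S : Set N} (hpq : p.HomotopicRel q S) :
    (he.comp p).HomotopicRel (he.comp q) S :=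
  let H := hpq.some
  ⟨{ toContinuousMap := he.comp H.toContinuousMap
     map_zero_left := by simp
     map_one_left := by simp
     prop' := fun t y hy => by simp [H.eq_fst t hy] }⟩

end

def genLoop {N : Type} {x : S₁} {y : S₂} (p : GenLoop N S₁ x) (hy : e x = y) : GenLoop N S₂ y :=
  ⟨he.comp p.1, fun z hz => by simp [p.2 z hz, hy]⟩

end IsKHomeomorph

section Square

variable {T₁ S₁ T₂ S₂ : Type} [TopologicalSpace T₁] [TopologicalSpace S₁] [TopologicalSpace T₂]
  [TopologicalSpace S₂] {F₁ : C(T₁, S₁)} {F₂ : C(T₂, S₂)} {eT : T₁ ≃ T₂} {eS : S₁ ≃ S₂}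

theorem IsKHomeomorph.comp_comm_square (hT : IsKHomeomorph eT) (hS : IsKHomeomorph eS)
    (hsq : ∀ t, F₂ (eT t) = eS (F₁ t)) {N : Type} [TopologicalSpace N] [LocallyCompactSpace N]
    (p : C(N, T₁)) : F₂.comp (hT.comp p) = hS.comp (F₁.comp p) := by
  ext; simp [hsq]

theorem symm_apply_comm_square (hsq : ∀ t, F₂ (eT t) = eS (F₁ t)) (s : T₂) :
    F₁ (eT.symm s) = eS.symm (F₂ s) := by
  rw [eS.eq_symm_apply, ← hsq, eT.apply_symm_apply]

theorem IsWeakHomotopyEquiv.of_kHomeomorph_square (hT : IsKHomeomorph eT)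
    (hS : IsKHomeomorph eS) (hsq : ∀ t, F₂ (eT t) = eS (F₁ t)) (hF : IsWeakHomotopyEquiv F₁) :
    IsWeakHomotopyEquiv F₂ := by
  have hsq' := symm_apply_comm_square hsq
  obtain ⟨hπ₀_surj, hπ₀_inj, hπₙ⟩ := hF
  refine ⟨fun y => ?_, fun x x' hxx' => ?_, fun n x => ?_⟩
  · obtain ⟨t, ht⟩ := hπ₀_surj (eS.symm y)
    exact ⟨eT t, by simpa [hsq] using hS.joined_map ht⟩
  · have hjoined := hS.symm.joined_map hxx'
    rw [← hsq', ← hsq'] at hjoined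
    simpa using hT.joined_map (hπ₀_inj _ _ hjoined)
  obtain ⟨u, rfl⟩ := eT.surjective x
  refine ⟨fun q => ?_, fun k k' hkk' => ?_⟩
  · obtain ⟨ℓ, hℓ⟩ := (hπₙ n u).1 (hS.symm.genLoop q (by rw [hsq, eS.symm_apply_apply]))
    refine ⟨hT.genLoop ℓ rfl, ?_⟩
    show (F₂.comp (hT.comp ℓ.1)).HomotopicRel q.1 _
    rw [hT.comp_comm_square hS hsq, ← hS.comp_symm_comp q.1]
    exact hS.homotopicRel_comp hℓ
  · have hback := (hπₙ n u).2 (hT.symm.genLoop k (eT.symm_apply_apply u))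
      (hT.symm.genLoop k' (eT.symm_apply_apply u)) (by
        show (F₁.comp (hT.symm.comp k.1)).HomotopicRel (F₁.comp (hT.symm.comp k'.1)) _
        rw [hT.symm.comp_comm_square hS.symm hsq', hT.symm.comp_comm_square hS.symm hsq']
        exact hS.symm.homotopicRel_comp hkk')
    show k.1.HomotopicRel k'.1 _
    rw [← hT.comp_symm_comp k.1, ← hT.comp_symm_comp k'.1]
    exact hT.homotopicRel_comp hback

theorem isWeakHomotopyEquiv_iff_of_kHomeomorph_square (hT : IsKHomeomorph eT)
    (hS : IsKHomeomorph eS) (hsq : ∀ t, F₂ (eT t) = eS (F₁ t)) :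
    IsWeakHomotopyEquiv F₁ ↔ IsWeakHomotopyEquiv F₂ :=
  ⟨.of_kHomeomorph_square hT hS hsq,
    .of_kHomeomorph_square hT.symm hS.symm (symm_apply_comm_square hsq)⟩

end Square

/-- `T × P → T × Q` is again a quotient map, as `T` is locally compact. -/
theorem _root_.Topology.IsQuotientMap.continuous_of_continuous_precomp {T P Q X : Type}
    [TopologicalSpace T] [TopologicalSpace P] [TopologicalSpace Q] [TopologicalSpace X]
    [LocallyCompactSpace T] [LocallyCompactSpace P] {q : C(P, Q)} (hq : IsQuotientMap q)
    {g : T → C(Q, X)} (hg : Continuous fun t => (g t).comp q) : Continuous g :=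
  ContinuousMap.continuous_of_continuous_uncurry _ <|
    hq.continuous_lift_prod_right (ContinuousMap.continuous_uncurry_of_continuous ⟨_, hg⟩)

def smashMk (A Z : PtdSpace) : C(A.carrier × Z.carrier, (Smash A Z).carrier) :=
  ⟨Quot.mk _, continuous_quot_mk⟩

theorem smashMk_pt_left (A Z : PtdSpace) (z : Z.carrier) :
    smashMk A Z (A.pt, z) = (Smash A Z).pt :=
  Quot.sound ⟨Or.inl rfl, Or.inl rfl⟩

theorem smashMk_pt_right (A Z : PtdSpace) (a : A.carrier) :
    smashMk A Z (a, Z.pt) = (Smash A Z).pt :=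
  Quot.sound ⟨Or.inr rfl, Or.inl rfl⟩

def mapSpaceVal (A X : PtdSpace) : C((mapSpace A X).carrier, C(A.carrier, X.carrier)) :=
  ⟨Subtype.val, continuous_subtype_val⟩

theorem mapSpace_apply_eq_pt_of_wedge {A Z X : PtdSpace} (h : (mapSpace Z (mapSpace A X)).carrier)
    {p : A.carrier × Z.carrier} (hp : p.1 = A.pt ∨ p.2 = Z.pt) : (h.1 p.2).1 p.1 = X.pt := by
  rcases hp with hp | hp
  · rw [hp, (h.1 p.2).2]
  · rw [hp, h.2]
    rfl

def smashCurry (A Z X : PtdSpace) [LocallyCompactSpace A.carrier] :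
    (mapSpace (Smash A Z) X).carrier ≃ (mapSpace Z (mapSpace A X)).carrier where
  toFun g :=
    ⟨⟨fun z => ⟨ContinuousMap.curry ((g.1.comp (smashMk A Z)).comp ContinuousMap.prodSwap) z,
        show g.1 (smashMk A Z (A.pt, z)) = X.pt by rw [smashMk_pt_left, g.2]⟩,
      ((ContinuousMap.curry _).continuous).subtype_mk _⟩,
     Subtype.ext (ContinuousMap.ext fun a =>
        show g.1 (smashMk A Z (a, Z.pt)) = X.pt by rw [smashMk_pt_right, g.2])⟩
  invFun h :=
    ⟨⟨Quot.lift (fun p => (h.1 p.2).1 p.1) fun p p' hpp' => by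
        rw [mapSpace_apply_eq_pt_of_wedge h hpp'.1, mapSpace_apply_eq_pt_of_wedge h hpp'.2],
      continuous_quot_lift _
        ((ContinuousMap.uncurry ((mapSpaceVal A X).comp h.1)).continuous.comp continuous_swap)⟩,
     mapSpace_apply_eq_pt_of_wedge h (Or.inl rfl)⟩
  left_inv g := Subtype.ext (ContinuousMap.ext fun s => Quot.inductionOn s fun _ => rfl)
  right_inv h := rfl

theorem isKHomeomorph_smashCurry (A Z X : PtdSpace) [LocallyCompactSpace A.carrier]
    [LocallyCompactSpace Z.carrier] : IsKHomeomorph (smashCurry A Z X) := by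
  intro T _ _ c
  constructor
  · intro hc
    have hprecomp : Continuous fun t => (ContinuousMap.uncurry
        ((mapSpaceVal A X).comp (smashCurry A Z X (c t)).1)).comp ContinuousMap.prodSwap :=
      (ContinuousMap.continuous_precomp _).comp <| ContinuousMap.continuous_uncurry.comp <|
        (ContinuousMap.continuous_postcomp _).comp (continuous_subtype_val.comp hc)
    exact continuous_induced_rng.2
      ((isQuotientMap_quot_mk : IsQuotientMap (smashMk A Z)).continuous_of_continuous_precomp
        hprecomp)
  · intro hc
    have hcurry : Continuous fun t =>
        ContinuousMap.curry ((c t).1.comp ((smashMk A Z).comp ContinuousMap.prodSwap)) :=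
      ContinuousMap.continuous_curry.comp <|
        (ContinuousMap.continuous_precomp _).comp (continuous_subtype_val.comp hc)
    exact continuous_induced_rng.2 <|
      (ContinuousMap.isEmbedding_postcomp (mapSpaceVal A X) IsEmbedding.subtypeVal).continuous_iff.2
        hcurry

theorem precompMap_smashCurry (A : PtdSpace) [LocallyCompactSpace A.carrier] {Z W : PtdSpace}
    (f : PtdMap Z W) (X : PtdSpace) (g : (mapSpace (Smash A W) X).carrier) :
    precompMap f (mapSpace A X) (smashCurry A W X g) =
      smashCurry A Z X (precompMap (smashMap A f) X g) :=
  rfl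

theorem isLocal_smash_iff_mapSpace_isLocal_general (A Z W : PtdSpace)
    [LocallyCompactSpace A.carrier]
    [LocallyCompactSpace Z.carrier]
    [LocallyCompactSpace W.carrier]
    (f : PtdMap Z W) (X : PtdSpace) :
    IsLocal (smashMap A f) X ↔ IsLocal f (mapSpace A X) :=
  isWeakHomotopyEquiv_iff_of_kHomeomorph_square (isKHomeomorph_smashCurry A W X)
    (isKHomeomorph_smashCurry A Z X) (precompMap_smashCurry A f X)

/-- For `A`, `Z`, `W` locally compact Hausdorff pointed spaces and a pointed map
`f : Z → W`, a pointed space `X` is `(id_A ∧ f)`-local if and only if `Map_*(A, X)` is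
`f`-local. -/
theorem isLocal_smash_iff_mapSpace_isLocal (A Z W : PtdSpace)
    [LocallyCompactSpace A.carrier] [T2Space A.carrier]
    [LocallyCompactSpace Z.carrier] [T2Space Z.carrier]
    [LocallyCompactSpace W.carrier] [T2Space W.carrier]
    (f : PtdMap Z W) (X : PtdSpace) :
    IsLocal (smashMap A f) X ↔ IsLocal f (mapSpace A X) :=
  isLocal_smash_iff_mapSpace_isLocal_general A Z W f X

end DetectMS
end
end

section
/- Let k > 0, let T be a finite abelian group, and let G be an abelian group. If the group Hom(ℤ^k ⊕ T, G) of additive homomorphisms is isomorphic (as an abelian group) to ℤ^k, then G ≅ ℤ. -/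
/-!
Evaluation at a coordinate embeds `G` into `Hom(ℤ^k ⊕ T, G) ≅ ℤ^k`, so `G` is torsion-free.
Then `Hom(T, G) = 0`, hence `G^k ≅ Hom(ℤ^k ⊕ T, G) ≅ ℤ^k`. In particular `G` embeds into `ℤ^k`,
so it is free of some finite rank `r`, and comparing ranks gives `k * r = k`, i.e. `r = 1`.
-/

open Module Function

section

variable {G : Type*} [AddCommGroup G]

theorem AddMonoidHom.eq_zero_of_finite_of_isAddTorsionFree {T : Type*} [AddCommGroup T]
    [Finite T] [IsAddTorsionFree G] (f : T →+ G) : f = 0 := by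
  ext t
  have hcard : Nat.card T • f t = 0 := by rw [← map_nsmul, card_nsmul_eq_zero', map_zero]
  simpa [Nat.card_pos.ne'] using hcard

theorem IsAddTorsionFree.of_addMonoidHom_of_surjective {M : Type*} [AddCommGroup M]
    [IsAddTorsionFree (M →+ G)] (p : M →+ ℤ) (hp : Surjective p) : IsAddTorsionFree G :=
  have hinj : Injective (p.compHom'.comp (zmultiplesAddHom G).toAddMonoidHom) := fun _ _ h ↦
    (zmultiplesAddHom G).injective <| (AddMonoidHom.cancel_right hp).1 h
  hinj.isAddTorsionFree _

theorem nonempty_addEquiv_int_of_linearEquiv_pi {ι : Type*} [Fintype ι] [Nonempty ι]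
    (e : (ι → G) ≃ₗ[ℤ] (ι → ℤ)) : Nonempty (G ≃+ ℤ) := by
  classical
  let i : ι := Classical.arbitrary ι
  let j : G →ₗ[ℤ] (ι → ℤ) := e.toLinearMap ∘ₗ LinearMap.single ℤ (fun _ ↦ G) i
  have hj : Injective j := e.injective.comp (Pi.single_injective (M := fun _ ↦ G) i)
  have : IsAddTorsionFree G := hj.isAddTorsionFree j.toAddMonoidHom
  have : Module.Finite ℤ G := .of_injective j hj
  have hrank : Fintype.card ι * finrank ℤ G = Fintype.card ι * 1 := by
    simpa [finrank_pi_fintype] using e.finrank_eq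
  have hG : finrank ℤ G = finrank ℤ ℤ := by
    simpa using Nat.eq_of_mul_eq_mul_left Fintype.card_pos hrank
  exact ⟨(LinearEquiv.ofFinrankEq G ℤ hG).toAddEquiv⟩

end

/-- If `k > 0`, `T` is a finite abelian group, `G` an abelian group, and the
group of additive homomorphisms `Hom(ℤ^k ⊕ T, G)` is isomorphic to `ℤ^k`, then `G ≅ ℤ`. -/
theorem hom_zpow_oplus_torsion_eq_zpow_implies_int (k : ℕ) (hk : 0 < k)
    (T : Type) [AddCommGroup T] [Finite T] (G : Type) [AddCommGroup G]
    (h : Nonempty ((((Fin k → ℤ) × T) →+ G) ≃+ (Fin k → ℤ))) :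
    Nonempty (G ≃+ ℤ) := by
  obtain ⟨e⟩ := h
  have : NeZero k := ⟨hk.ne'⟩
  have : IsAddTorsionFree ((Fin k → ℤ) × T →+ G) := e.injective.isAddTorsionFree e.toAddMonoidHom
  have : IsAddTorsionFree G := .of_addMonoidHom_of_surjective
    ((Pi.evalAddMonoidHom (fun _ : Fin k ↦ ℤ) 0).comp (AddMonoidHom.fst _ T))
    fun n ↦ ⟨(fun _ ↦ n, 0), rfl⟩
  have : Unique (T →ₗ[ℤ] G) :=
    { default := 0
      uniq f := LinearMap.toAddMonoidHom_injective
        f.toAddMonoidHom.eq_zero_of_finite_of_isAddTorsionFree }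
  let homEquiv : ((Fin k → ℤ) × T →ₗ[ℤ] G) ≃ₗ[ℤ] (Fin k → ℤ) :=
    (addMonoidHomLequivInt ℤ).symm ≪≫ₗ e.toIntLinearEquiv
  exact nonempty_addEquiv_int_of_linearEquiv_pi <|
    (LinearEquiv.piRing ℤ G (Fin k) ℤ).symm ≪≫ₗ LinearEquiv.prodUnique.symm ≪≫ₗ
      LinearMap.coprodEquiv ℤ ≪≫ₗ homEquiv
end

section
/- Let k > 0 and let G be an abelian group. If the direct sum G^k of k copies of G is isomorphic (as an abelian group) to ℤ^k, then G ≅ ℤ. -/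
/-!
`G` is a direct summand of `G^k ≅ ℤ^k`, hence a finitely generated projective, so free,
`ℤ`-module. Comparing ranks, `k * rank G = k`, so `G` is free of rank one.
-/

section

variable {R ι : Type*}

theorem Module.Projective.of_pi [Semiring R] (M : ι → Type*) [∀ i, AddCommMonoid (M i)]
    [∀ i, Module R (M i)] [Module.Projective R (∀ i, M i)] (i : ι) :
    Module.Projective R (M i) := by
  classical
  exact .of_split (LinearMap.single R M i) (LinearMap.proj i)
    (LinearMap.proj_comp_single_same R M i)

theorem nonempty_linearEquiv_of_pi_linearEquiv_pi [CommRing R] [IsDomain R]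
    [IsPrincipalIdealRing R] {M : Type*} [AddCommGroup M] [Module R M] [Fintype ι] [Nonempty ι]
    (e : (ι → M) ≃ₗ[R] (ι → R)) : Nonempty (R ≃ₗ[R] M) := by
  have : Module.Finite R (ι → M) := .equiv e.symm
  have : Module.Projective R (ι → M) := .of_equiv e.symm
  obtain ⟨i⟩ := ‹Nonempty ι›
  have : Module.Finite R M := .of_pi (fun _ => M) i
  have : Module.Projective R M := .of_pi (fun _ => M) i
  have hrank : Fintype.card ι * Module.finrank R M = Fintype.card ι * 1 := by
    simpa [Module.finrank_pi_fintype] using e.finrank_eq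
  exact Module.nonempty_linearEquiv_of_finrank_eq_one
    (Nat.eq_of_mul_eq_mul_left Fintype.card_pos hrank)

end

/-- If `k > 0` and the direct sum of `k` copies of an abelian group `G` is
isomorphic to `ℤ^k`, then `G ≅ ℤ`. -/
theorem pow_eq_zpow_implies_int (k : ℕ) (hk : 0 < k) (G : Type) [AddCommGroup G]
    (h : Nonempty ((Fin k → G) ≃+ (Fin k → ℤ))) :
    Nonempty (G ≃+ ℤ) := by
  obtain ⟨e⟩ := h
  have : Nonempty (Fin k) := ⟨⟨0, hk⟩⟩
  obtain ⟨f⟩ := nonempty_linearEquiv_of_pi_linearEquiv_pi e.toIntLinearEquiv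
  exact ⟨f.symm.toAddEquiv⟩
end
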